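/- Every ultrafilter in an inverse semigroup with zero is a tight filter. -/
import Mathlib


class InvSemigroup (S : Type*) extends Mul S, Inv S where
  mul_assoc : ∀ a b c : S, a * b * c = a * (b * c)
  mul_inv_mul : ∀ a : S, a * a⁻¹ * a = a
  inv_mul_inv : ∀ a : S, a⁻¹ * a * a⁻¹ = a⁻¹
  idem_comm : ∀ e f : S, e * e = e → f * f = f → e * f = f * e

class InvSemigroupWithZero (S : Type*) extends InvSemigroup S, Zero S where
  zero_mul : ∀ a : S, 0 * a = 0
  mul_zero : ∀ a : S, a * 0 = 0

/-- The natural partial order on an inverse semigroup: `a ≤ b` iff `a = b * (a⁻¹ * a)`. -/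
def nle {S : Type*} [InvSemigroup S] (a b : S) : Prop := a = b * (a⁻¹ * a)

/-- The weak meet condition: every intersection of two principal order ideals is a
finitely generated order ideal. -/
def WeakMeet (S : Type*) [InvSemigroup S] : Prop :=
  ∀ a b : S, ∃ C : Finset S,
    {x : S | nle x a ∧ nle x b} = {x : S | ∃ c ∈ C, nle x c}

/-- A subset is consistent if every finite nonempty subset has a nonzero lower bound. -/
def Consistent {S : Type*} [InvSemigroupWithZero S] (A : Set S) : Prop :=
  ∀ B : Finset S, ↑B ⊆ A → B.Nonempty → ∃ b : S, b ≠ 0 ∧ ∀ a ∈ B, nle b a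

/-- A (proper) filter: nonempty, upward closed, downward directed, omitting zero. -/
def IsFilter {S : Type*} [InvSemigroupWithZero S] (F : Set S) : Prop :=
  F.Nonempty ∧ (∀ a ∈ F, ∀ b : S, nle a b → b ∈ F) ∧
    (∀ a ∈ F, ∀ b ∈ F, ∃ c ∈ F, nle c a ∧ nle c b) ∧ (0 : S) ∉ F

/-- An ultrafilter is a maximal proper filter. -/
def IsUltrafilter {S : Type*} [InvSemigroupWithZero S] (F : Set S) : Prop :=
  IsFilter F ∧ ∀ G : Set S, IsFilter G → F ⊆ G → G = F

/-- A tight filter: a proper filter such that whenever `x ∈ F` and `X` is a finite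
subset of `x^↓` with `x → X` (every nonzero `z ≤ x` has a nonzero common lower
bound with some member of `X`), then some member of `X` lies in `F`. -/
def TightFilter {S : Type*} [InvSemigroupWithZero S] (F : Set S) : Prop :=
  IsFilter F ∧ ∀ x ∈ F, ∀ X : Finset S, (∀ y ∈ X, nle y x) →
    (∀ z : S, z ≠ 0 → nle z x → ∃ y ∈ X, ∃ w : S, w ≠ 0 ∧ nle w z ∧ nle w y) →
    ∃ y ∈ X, y ∈ F

section AuxLemmas

variable {S : Type*} [InvSemigroup S]

private instance semigroupOfInv : Semigroup S :=
  { (inferInstance : Mul S) with mul_assoc := InvSemigroup.mul_assoc }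

private lemma my_idem_d (a : S) : (a⁻¹ * a) * (a⁻¹ * a) = a⁻¹ * a := by
  calc (a⁻¹ * a) * (a⁻¹ * a) = a⁻¹ * (a * a⁻¹ * a) := by simp [mul_assoc]
    _ = a⁻¹ * a := by rw [InvSemigroup.mul_inv_mul]

private lemma my_inv_unique {a x y : S} (h1 : a*x*a = a) (h2 : x*a*x = x)
    (h3 : a*y*a = a) (h4 : y*a*y = y) : x = y := by
  have exa : (x*a)*(x*a) = x*a := by
    calc (x*a)*(x*a) = (x*a*x)*a := by simp [mul_assoc]
      _ = x*a := by rw [h2]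
  have eya : (y*a)*(y*a) = y*a := by
    calc (y*a)*(y*a) = (y*a*y)*a := by simp [mul_assoc]
      _ = y*a := by rw [h4]
  have eax : (a*x)*(a*x) = a*x := by
    calc (a*x)*(a*x) = (a*x*a)*x := by simp [mul_assoc]
      _ = a*x := by rw [h1]
  have eay : (a*y)*(a*y) = a*y := by
    calc (a*y)*(a*y) = (a*y*a)*y := by simp [mul_assoc]
      _ = a*y := by rw [h3]
  have hx : x = y*a*x := by
    calc x = x*a*x := h2.symm
      _ = (x*(a*y*a))*x := by rw [h3]
      _ = ((x*a)*(y*a))*x := by simp [mul_assoc]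
      _ = ((y*a)*(x*a))*x := by rw [InvSemigroup.idem_comm (x*a) (y*a) exa eya]
      _ = (y*a)*(x*a*x) := by simp [mul_assoc]
      _ = y*a*x := by rw [h2]
  have hy : y = y*a*x := by
    calc y = y*a*y := h4.symm
      _ = (y*(a*x*a))*y := by rw [h1]
      _ = y*((a*x)*(a*y)) := by simp [mul_assoc]
      _ = y*((a*y)*(a*x)) := by rw [InvSemigroup.idem_comm (a*x) (a*y) eax eay]
      _ = (y*a*y)*(a*x) := by simp [mul_assoc]
      _ = y*(a*x) := by rw [h4]
      _ = y*a*x := by rw [mul_assoc]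
  exact hx.trans hy.symm

private lemma my_minv_rev (a b : S) : (a*b)⁻¹ = b⁻¹*a⁻¹ := by
  have ed : (a⁻¹*a)*(a⁻¹*a) = a⁻¹*a := my_idem_d a
  have er : (b*b⁻¹)*(b*b⁻¹) = b*b⁻¹ := by
    calc (b*b⁻¹)*(b*b⁻¹) = b*(b⁻¹*b*b⁻¹) := by simp [mul_assoc]
      _ = b*b⁻¹ := by rw [InvSemigroup.inv_mul_inv]
  have h3 : (a*b)*(b⁻¹*a⁻¹)*(a*b) = a*b := by
    calc (a*b)*(b⁻¹*a⁻¹)*(a*b) = (a*((b*b⁻¹)*(a⁻¹*a)))*b := by simp [mul_assoc]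
      _ = (a*((a⁻¹*a)*(b*b⁻¹)))*b := by
          rw [InvSemigroup.idem_comm (b*b⁻¹) (a⁻¹*a) er ed]
      _ = (a*a⁻¹*a)*(b*b⁻¹*b) := by simp [mul_assoc]
      _ = a*b := by rw [InvSemigroup.mul_inv_mul, InvSemigroup.mul_inv_mul]
  have h4 : (b⁻¹*a⁻¹)*(a*b)*(b⁻¹*a⁻¹) = b⁻¹*a⁻¹ := by
    calc (b⁻¹*a⁻¹)*(a*b)*(b⁻¹*a⁻¹) = (b⁻¹*((a⁻¹*a)*(b*b⁻¹)))*a⁻¹ := by simp [mul_assoc]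
      _ = (b⁻¹*((b*b⁻¹)*(a⁻¹*a)))*a⁻¹ := by
          rw [InvSemigroup.idem_comm (a⁻¹*a) (b*b⁻¹) ed er]
      _ = (b⁻¹*b*b⁻¹)*(a⁻¹*a*a⁻¹) := by simp [mul_assoc]
      _ = b⁻¹*a⁻¹ := by rw [InvSemigroup.inv_mul_inv, InvSemigroup.inv_mul_inv]
  exact my_inv_unique (InvSemigroup.mul_inv_mul (a*b)) (InvSemigroup.inv_mul_inv (a*b)) h3 h4

private lemma my_idem_inv {e : S} (he : e*e = e) : e⁻¹ = e :=
  my_inv_unique (InvSemigroup.mul_inv_mul e) (InvSemigroup.inv_mul_inv e)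
    (by rw [he, he]) (by rw [he, he])

/-- If `a ≤ b` then `a⁻¹a = (b⁻¹b)(a⁻¹a)`. -/
private lemma my_d_eq {a b : S} (h : nle a b) : a⁻¹*a = (b⁻¹*b)*(a⁻¹*a) := by
  have h' : a = b*(a⁻¹*a) := h
  have ha : a⁻¹ = (a⁻¹*a)*b⁻¹ := by
    calc a⁻¹ = (b*(a⁻¹*a))⁻¹ := by rw [← h']
      _ = (a⁻¹*a)⁻¹*b⁻¹ := by rw [my_minv_rev]
      _ = (a⁻¹*a)*b⁻¹ := by rw [my_idem_inv (my_idem_d a)]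
  calc a⁻¹*a = ((a⁻¹*a)*b⁻¹)*(b*(a⁻¹*a)) := by rw [← ha, ← h']
    _ = ((a⁻¹*a)*(b⁻¹*b))*(a⁻¹*a) := by simp [mul_assoc]
    _ = ((b⁻¹*b)*(a⁻¹*a))*(a⁻¹*a) := by
        rw [InvSemigroup.idem_comm (a⁻¹*a) (b⁻¹*b) (my_idem_d a) (my_idem_d b)]
    _ = (b⁻¹*b)*((a⁻¹*a)*(a⁻¹*a)) := by rw [mul_assoc]
    _ = (b⁻¹*b)*(a⁻¹*a) := by rw [my_idem_d]

private lemma my_nle_refl (a : S) : nle a a := by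
  show a = a * (a⁻¹ * a)
  rw [← mul_assoc, InvSemigroup.mul_inv_mul]

private lemma my_nle_trans {a b c : S} (hab : nle a b) (hbc : nle b c) : nle a c := by
  show a = c * (a⁻¹ * a)
  have hbc' : b = c*(b⁻¹*b) := hbc
  calc a = b*(a⁻¹*a) := hab
    _ = (c*(b⁻¹*b))*(a⁻¹*a) := by rw [← hbc']
    _ = c*((b⁻¹*b)*(a⁻¹*a)) := by rw [mul_assoc]
    _ = c*(a⁻¹*a) := by rw [← my_d_eq hab]

private lemma my_nle_mul_idem (x : S) {e : S} (he : e*e = e) : nle (x*e) x := by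
  show x*e = x * ((x*e)⁻¹ * (x*e))
  have key : x*((x*e)⁻¹*(x*e)) = x*e := by
    calc x*((x*e)⁻¹*(x*e)) = x*((e⁻¹*x⁻¹)*(x*e)) := by rw [my_minv_rev]
      _ = x*((e*x⁻¹)*(x*e)) := by rw [my_idem_inv he]
      _ = x*((e*(x⁻¹*x))*e) := by simp [mul_assoc]
      _ = x*(((x⁻¹*x)*e)*e) := by
          rw [InvSemigroup.idem_comm e (x⁻¹*x) he (my_idem_d x)]
      _ = (x*(x⁻¹*x))*(e*e) := by simp [mul_assoc]
      _ = (x*(x⁻¹*x))*e := by rw [he]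
      _ = x*e := by rw [← mul_assoc, InvSemigroup.mul_inv_mul]
  exact key.symm

private lemma my_nle_common {z a b : S} (hza : nle z a) (hzb : nle z b) :
    nle z (a*(b⁻¹*b)) := by
  show z = (a*(b⁻¹*b)) * (z⁻¹*z)
  have hza' : z = a*(z⁻¹*z) := hza
  have hzb' : z = b*(z⁻¹*z) := hzb
  have key : (a*(b⁻¹*b))*(z⁻¹*z) = z := by
    calc (a*(b⁻¹*b))*(z⁻¹*z) = a*((b⁻¹*b)*(z⁻¹*z)) := by rw [mul_assoc]
      _ = a*((z⁻¹*z)*(b⁻¹*b)) := by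
          rw [InvSemigroup.idem_comm (b⁻¹*b) (z⁻¹*z) (my_idem_d b) (my_idem_d z)]
      _ = (a*(z⁻¹*z))*(b⁻¹*b) := (mul_assoc a (z⁻¹*z) (b⁻¹*b)).symm
      _ = z*(b⁻¹*b) := by rw [← hza']
      _ = (b*(z⁻¹*z))*(b⁻¹*b) := congrArg (· * (b⁻¹*b)) hzb'
      _ = b*((z⁻¹*z)*(b⁻¹*b)) := by rw [mul_assoc]
      _ = b*((b⁻¹*b)*(z⁻¹*z)) := by
          rw [InvSemigroup.idem_comm (z⁻¹*z) (b⁻¹*b) (my_idem_d z) (my_idem_d b)]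
      _ = (b*(b⁻¹*b))*(z⁻¹*z) := (mul_assoc b (b⁻¹*b) (z⁻¹*z)).symm
      _ = b*(z⁻¹*z) :=
          congrArg (· * (z⁻¹*z)) (by rw [← mul_assoc, InvSemigroup.mul_inv_mul] : b*(b⁻¹*b) = b)
      _ = z := hzb'.symm
  exact key.symm

private lemma my_nle_mono_idem (a : S) {f' f : S} (h : nle f' f) :
    nle (a*(f'⁻¹*f')) (a*(f⁻¹*f)) := by
  have key : a*(f'⁻¹*f') = (a*(f⁻¹*f))*(f'⁻¹*f') := by
    conv_lhs => rw [my_d_eq h]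
    simp [mul_assoc]
  rw [key]
  exact my_nle_mul_idem _ (my_idem_d f')

/-- Elements below a common upper bound commute in the pseudo-meet sense. -/
private lemma my_magic {x y f : S} (hy : nle y x) (hf : nle f x) :
    y*(f⁻¹*f) = f*(y⁻¹*y) := by
  have hy' : y = x*(y⁻¹*y) := hy
  have hf' : f = x*(f⁻¹*f) := hf
  calc y*(f⁻¹*f) = (x*(y⁻¹*y))*(f⁻¹*f) := congrArg (· * (f⁻¹*f)) hy'
    _ = x*((y⁻¹*y)*(f⁻¹*f)) := mul_assoc _ _ _
    _ = x*((f⁻¹*f)*(y⁻¹*y)) := by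
        rw [InvSemigroup.idem_comm (y⁻¹*y) (f⁻¹*f) (my_idem_d y) (my_idem_d f)]
    _ = (x*(f⁻¹*f))*(y⁻¹*y) := (mul_assoc _ _ _).symm
    _ = f*(y⁻¹*y) := congrArg (· * (y⁻¹*y)) hf'.symm

end AuxLemmas

section AuxZero

variable {S : Type*} [InvSemigroupWithZero S]

private lemma my_nle_zero {z : S} (h : nle z 0) : z = 0 :=
  h.trans (InvSemigroupWithZero.zero_mul _)

end AuxZero

/-- Every ultrafilter in an inverse semigroup with zero is a tight filter. -/
theorem stmt19 {S : Type*} [InvSemigroupWithZero S] (F : Set S)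
    (hF : IsUltrafilter F) : TightFilter F := by
  obtain ⟨hFfil, hmax⟩ := hF
  obtain ⟨hne, hup, hdir, h0⟩ := hFfil
  refine ⟨⟨hne, hup, hdir, h0⟩, ?_⟩
  intro x hxF X hXle hcov
  by_cases hA : ∃ y ∈ X, ∀ f ∈ F, nle f x → y * (f⁻¹*f) ≠ 0
  · -- Case A: some `y ∈ X` has nonzero pseudo-meet with every `f ∈ F` below `x`.
    obtain ⟨y, hyX, hy⟩ := hA
    set G : Set S := {t | ∃ f ∈ F, nle f x ∧ nle (y * (f⁻¹*f)) t} with hGdef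
    have hyG : y ∈ G := ⟨x, hxF, my_nle_refl x, my_nle_mul_idem y (my_idem_d x)⟩
    have hGfil : IsFilter G := by
      refine ⟨⟨y, hyG⟩, ?_, ?_, ?_⟩
      · rintro a ⟨f, hfF, hfx, hfa⟩ b hab
        exact ⟨f, hfF, hfx, my_nle_trans hfa hab⟩
      · rintro a ⟨f1, hf1F, hf1x, h1⟩ b ⟨f2, hf2F, hf2x, h2⟩
        obtain ⟨f3, hf3F, h31, h32⟩ := hdir f1 hf1F f2 hf2F
        refine ⟨y * (f3⁻¹*f3), ⟨f3, hf3F, my_nle_trans h31 hf1x, my_nle_refl _⟩, ?_, ?_⟩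
        · exact my_nle_trans (my_nle_mono_idem y h31) h1
        · exact my_nle_trans (my_nle_mono_idem y h32) h2
      · rintro ⟨f, hfF, hfx, hf0⟩
        exact hy f hfF hfx (my_nle_zero hf0)
    have hFG : F ⊆ G := by
      intro g hgF
      obtain ⟨c, hcF, hcx, hcg⟩ := hdir x hxF g hgF
      refine ⟨c, hcF, hcx, ?_⟩
      have hmain : nle (c * (y⁻¹*y)) g := my_nle_trans (my_nle_mul_idem c (my_idem_d y)) hcg
      rwa [← my_magic (hXle y hyX) hcx] at hmain
    have hGF : G = F := hmax G hGfil hFG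
    exact ⟨y, hyX, hGF ▸ hyG⟩
  · -- Case B: every `y ∈ X` is annihilated by some `f ∈ F` below `x`.
    push_neg at hA
    have hB : ∀ y : S, ∃ f, f ∈ F ∧ nle f x ∧ (y ∈ X → y * (f⁻¹*f) = 0) := by
      intro y
      by_cases hyX : y ∈ X
      · obtain ⟨f, hfF, hfx, hf0⟩ := hA y hyX
        exact ⟨f, hfF, hfx, fun _ => hf0⟩
      · exact ⟨x, hxF, my_nle_refl x, fun h => absurd h hyX⟩
    choose g hgF hgx hgz using hB
    have key : ∀ B : Finset S, ∃ f ∈ F, nle f x ∧ ∀ y ∈ B, nle f (g y) := by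
      intro B
      classical
      induction B using Finset.induction_on with
      | empty => exact ⟨x, hxF, my_nle_refl x, by simp⟩
      | @insert a B _ ih =>
        obtain ⟨f, hfF, hfx, hfB⟩ := ih
        obtain ⟨f', hf'F, h1, h2⟩ := hdir f hfF (g a) (hgF a)
        refine ⟨f', hf'F, my_nle_trans h1 hfx, ?_⟩
        intro y hy
        rcases Finset.mem_insert.1 hy with rfl | hyB
        · exact h2
        · exact my_nle_trans h1 (hfB y hyB)
    obtain ⟨f, hfF, hfx, hfg⟩ := key X
    have hf0 : f ≠ 0 := fun h => h0 (h ▸ hfF)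
    obtain ⟨y, hyX, w, hw0, hwf, hwy⟩ := hcov f hf0 hfx
    have hcom : nle w (y * ((g y)⁻¹ * (g y))) :=
      my_nle_common hwy (my_nle_trans hwf (hfg y hyX))
    rw [hgz y hyX] at hcom
    exact absurd (my_nle_zero hcom) hw0
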